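/- Let λ > 1, a* > 1, L > 0 be real numbers with L < λ·a*. Let X be a compact metric space, f : X → X a Lipschitz map with Lipschitz constant at most L, and a, b : X → ℝ Lipschitz functions with a(x) ≥ a* for all x ∈ X. Then the function S(x) := ∑_{i=0}^∞ λ^{−i} b(f^i(x)) ∏_{j=0}^{i} a(f^j(x))⁻¹ is Lipschitz continuous on X. -/

import Mathlib

/-!
The partial sums `sₙ` of the stable series are the iterates from `0` of the affine operator
`T h = a⁻¹ (b + λ⁻¹ h ∘ f)`, since `sₙ₊₁ = T sₙ`. For `|h| ≤ R` and `h` `K`-Lipschitz, `T h` is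
bounded by `a*⁻¹ (‖b‖ + λ⁻¹ R)` and Lipschitz with constant `A(R) + L K / (λ a*)`. Both rates
`1 / (λ a*)` and `L / (λ a*)` are `< 1`, so for large `R` and then large `K` the set of such `h`
is `T`-invariant and contains every `sₙ`. It is closed under pointwise limits, and `sₙ → S`
pointwise because the summands decay like `(λ a*)⁻ⁱ`.
-/

open NNReal Filter Finset Topology

theorem NNReal.exists_add_mul_le_of_lt_one (A : ℝ≥0) {ρ : ℝ≥0} (hρ : ρ < 1) :
    ∃ K : ℝ≥0, A + ρ * K ≤ K := by
  refine ⟨A / (1 - ρ), le_of_eq ?_⟩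
  have hpos : (0 : ℝ) < 1 - ρ := sub_pos.2 (by exact_mod_cast hρ)
  rw [← NNReal.coe_inj]
  push_cast [NNReal.coe_sub hρ.le]
  field_simp
  ring

section BoundedLipschitz

variable {X R : Type*} [PseudoMetricSpace X]

theorem LipschitzWith.mul_of_norm_le [SeminormedRing R] {u v : X → R} {Ku Kv U V : ℝ≥0}
    (hu : LipschitzWith Ku u) (hv : LipschitzWith Kv v)
    (hU : ∀ x, ‖u x‖ ≤ U) (hV : ∀ x, ‖v x‖ ≤ V) :
    LipschitzWith (U * Kv + V * Ku) fun x => u x * v x := by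
  refine LipschitzWith.of_dist_le_mul fun x y => ?_
  have hu' := hu.dist_le_mul x y
  have hv' := hv.dist_le_mul x y
  rw [dist_eq_norm] at hu' hv' ⊢
  calc ‖u x * v x - u y * v y‖ = ‖u x * (v x - v y) + (u x - u y) * v y‖ := by
        congr 1; noncomm_ring
    _ ≤ ‖u x‖ * ‖v x - v y‖ + ‖u x - u y‖ * ‖v y‖ :=
        (norm_add_le _ _).trans (add_le_add (norm_mul_le _ _) (norm_mul_le _ _))
    _ ≤ U * (Kv * dist x y) + Ku * dist x y * V := by
        gcongr
        exacts [hU x, hV y]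
    _ = ↑(U * Kv + V * Ku) * dist x y := by push_cast; ring

theorem LipschitzWith.inv_of_le_norm [NormedDivisionRing R] {u : X → R} {K c : ℝ≥0}
    (hu : LipschitzWith K u) (hc : 0 < c) (hle : ∀ x, c ≤ ‖u x‖) :
    LipschitzWith (K / c ^ 2) fun x => (u x)⁻¹ := by
  refine LipschitzWith.of_dist_le_mul fun x y => ?_
  have hc' : (0 : ℝ) < c := hc
  have hx : 0 < ‖u x‖ := hc'.trans_le (hle x)
  have hy : 0 < ‖u y‖ := hc'.trans_le (hle y)
  have huyx := hu.dist_le_mul y x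
  rw [dist_eq_norm, dist_comm] at huyx
  rw [dist_eq_norm, inv_sub_inv' (norm_pos_iff.1 hx) (norm_pos_iff.1 hy), norm_mul, norm_mul,
    norm_inv, norm_inv]
  calc ‖u x‖⁻¹ * ‖u y - u x‖ * ‖u y‖⁻¹ ≤ (c : ℝ)⁻¹ * (K * dist x y) * (c : ℝ)⁻¹ := by
        gcongr
        exacts [hle x, hle y]
    _ = ↑(K / c ^ 2) * dist x y := by push_cast; ring

end BoundedLipschitz
section StableSeries

variable {X : Type*} (μ : ℝ) (f : X → X) (a b : X → ℝ)

/-- `μ` stands for `λ⁻¹`. -/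
noncomputable def stableTerm (i : ℕ) (x : X) : ℝ :=
  μ ^ i * b (f^[i] x) * ∏ j ∈ range (i + 1), (a (f^[j] x))⁻¹

theorem stableTerm_zero (x : X) : stableTerm μ f a b 0 x = b x * (a x)⁻¹ := by
  simp [stableTerm]

theorem stableTerm_succ (i : ℕ) (x : X) :
    stableTerm μ f a b (i + 1) x = μ * (a x)⁻¹ * stableTerm μ f a b i (f x) := by
  simp only [stableTerm, prod_range_succ' _ (i + 1), Function.iterate_succ_apply,
    Function.iterate_zero_apply, pow_succ]
  ring

theorem sum_range_succ_stableTerm (n : ℕ) (x : X) :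
    ∑ i ∈ range (n + 1), stableTerm μ f a b i x =
      (a x)⁻¹ * (b x + μ * ∑ i ∈ range n, stableTerm μ f a b i (f x)) := by
  rw [sum_range_succ', stableTerm_zero, add_comm, mul_add, mul_sum, mul_sum, mul_comm]
  congr 1
  exact sum_congr rfl fun i _ => by rw [stableTerm_succ]; ring

variable {μ f a b} {c Bb : ℝ≥0}

theorem abs_stableTerm_le (hc : 0 < c) (ha : ∀ x, c ≤ |a x|) (hb : ∀ x, |b x| ≤ Bb)
    (i : ℕ) (x : X) : |stableTerm μ f a b i x| ≤ Bb / c * (|μ| / c) ^ i := by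
  induction i generalizing x with
  | zero =>
    rw [stableTerm_zero, abs_mul, abs_inv, ← div_eq_mul_inv, pow_zero, mul_one]
    exact div_le_div₀ Bb.2 (hb x) hc (ha x)
  | succ i ih =>
    rw [stableTerm_succ, abs_mul, abs_mul, abs_inv, ← div_eq_mul_inv]
    calc |μ| / |a x| * |stableTerm μ f a b i (f x)| ≤ |μ| / c * (Bb / c * (|μ| / c) ^ i) := by
          gcongr
          exacts [ha x, ih (f x)]
      _ = Bb / c * (|μ| / c) ^ (i + 1) := by ring

theorem summable_stableTerm (hc : 0 < c) (ha : ∀ x, c ≤ |a x|) (hb : ∀ x, |b x| ≤ Bb)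
    (hμ : ‖μ‖₊ < c) (x : X) : Summable fun i => stableTerm μ f a b i x :=
  have hμc : |μ| / c < 1 :=
    (div_lt_one (NNReal.coe_pos.2 hc)).2 (by simpa using NNReal.coe_lt_coe.2 hμ)
  .of_norm_bounded ((summable_geometric_of_lt_one (by positivity) hμc).mul_left _)
    fun i => by simpa only [Real.norm_eq_abs] using abs_stableTerm_le hc ha hb i x

variable [PseudoMetricSpace X] {Ka Kb Lf : ℝ≥0}

theorem lipschitzWith_inv_mul_add_mul_comp {h : X → ℝ} {Kh R : ℝ≥0} (hc : 0 < c)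
    (ha : ∀ x, c ≤ |a x|) (hb : ∀ x, |b x| ≤ Bb) (ha_lip : LipschitzWith Ka a)
    (hb_lip : LipschitzWith Kb b) (hf : LipschitzWith Lf f) (hh : LipschitzWith Kh h)
    (hR : ∀ x, |h x| ≤ R) :
    LipschitzWith (c⁻¹ * (Kb + ‖μ‖₊ * (Kh * Lf)) + (Bb + ‖μ‖₊ * R) * (Ka / c ^ 2))
      fun x => (a x)⁻¹ * (b x + μ * h (f x)) := by
  have hinv (x : X) : ‖(a x)⁻¹‖ ≤ ↑c⁻¹ := by
    rw [norm_inv, NNReal.coe_inv]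
    exact inv_anti₀ hc (ha x)
  have hv (x : X) : ‖b x + μ * h (f x)‖ ≤ ↑(Bb + ‖μ‖₊ * R) := by
    push_cast
    refine (norm_add_le _ _).trans (add_le_add (hb x) ?_)
    rw [norm_mul]
    gcongr
    exact hR (f x)
  exact (ha_lip.inv_of_le_norm hc ha).mul_of_norm_le
    (hb_lip.add ((lipschitzWith_smul μ).comp (hh.comp hf))) hinv hv

theorem lipschitzWith_sum_stableTerm_and_abs_le {R K : ℝ≥0} (hc : 0 < c) (ha : ∀ x, c ≤ |a x|)
    (hb : ∀ x, |b x| ≤ Bb) (ha_lip : LipschitzWith Ka a) (hb_lip : LipschitzWith Kb b)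
    (hf : LipschitzWith Lf f) (hR : c⁻¹ * (Bb + ‖μ‖₊ * R) ≤ R)
    (hK : c⁻¹ * (Kb + ‖μ‖₊ * (K * Lf)) + (Bb + ‖μ‖₊ * R) * (Ka / c ^ 2) ≤ K) (n : ℕ) :
    LipschitzWith K (fun x => ∑ i ∈ range n, stableTerm μ f a b i x) ∧
      ∀ x, |∑ i ∈ range n, stableTerm μ f a b i x| ≤ R := by
  induction n with
  | zero => simpa using LipschitzWith.const' (0 : ℝ)
  | succ n ih =>
    simp only [sum_range_succ_stableTerm]
    refine ⟨(lipschitzWith_inv_mul_add_mul_comp hc ha hb ha_lip hb_lip hf ih.1 ih.2).weaken hK,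
      fun x => ?_⟩
    calc |(a x)⁻¹ * (b x + μ * ∑ i ∈ range n, stableTerm μ f a b i (f x))|
        ≤ |a x|⁻¹ * (|b x| + |μ| * |∑ i ∈ range n, stableTerm μ f a b i (f x)|) := by
          rw [abs_mul, abs_inv, ← abs_mul]
          gcongr
          exact abs_add_le _ _
      _ ≤ (c : ℝ)⁻¹ * (Bb + |μ| * R) := by
          gcongr
          exacts [ha x, hb x, ih.2 (f x)]
      _ ≤ R := by exact_mod_cast hR

theorem exists_lipschitzWith_sum_stableTerm (hc : 0 < c) (ha : ∀ x, c ≤ |a x|)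
    (hb : ∀ x, |b x| ≤ Bb) (ha_lip : LipschitzWith Ka a) (hb_lip : LipschitzWith Kb b)
    (hf : LipschitzWith Lf f) (hμ : ‖μ‖₊ < c) (hμL : ‖μ‖₊ * Lf < c) :
    ∃ K : ℝ≥0, ∀ n, LipschitzWith K fun x => ∑ i ∈ range n, stableTerm μ f a b i x := by
  obtain ⟨R, hR⟩ := NNReal.exists_add_mul_le_of_lt_one (c⁻¹ * Bb) (ρ := c⁻¹ * ‖μ‖₊)
    (by rwa [inv_mul_lt_one₀ hc])
  obtain ⟨K, hK⟩ := NNReal.exists_add_mul_le_of_lt_one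
    (c⁻¹ * Kb + (Bb + ‖μ‖₊ * R) * (Ka / c ^ 2)) (ρ := c⁻¹ * (‖μ‖₊ * Lf))
    (by rwa [inv_mul_lt_one₀ hc])
  exact ⟨K, fun n => (lipschitzWith_sum_stableTerm_and_abs_le hc ha hb ha_lip hb_lip hf
    (le_of_eq_of_le (by ring) hR) (le_of_eq_of_le (by ring) hK) n).1⟩

end StableSeries

theorem stable_series_lipschitz_general {X : Type*} [MetricSpace X] [CompactSpace X]
    (lam astar L : ℝ) (hlam : 1 < lam) (hastar : 1 < astar)
    (hLlt : L < lam * astar)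
    (f : X → X) (hf : LipschitzWith (Real.toNNReal L) f)
    (a b : X → ℝ) (Ka Kb : ℝ≥0)
    (ha_lip : LipschitzWith Ka a) (hb_lip : LipschitzWith Kb b)
    (ha : ∀ x, astar ≤ a x)
    (S : X → ℝ)
    (hS : ∀ x, S x = ∑' i,
      (lam⁻¹) ^ i * b (f^[i] x) * ∏ j ∈ Finset.range (i + 1), (a (f^[j] x))⁻¹) :
    ∃ K : ℝ≥0, LipschitzWith K S := by
  set c := astar.toNNReal
  have hc_coe : (c : ℝ) = astar := Real.coe_toNNReal _ (by linarith)
  have hc : 0 < c := Real.toNNReal_pos.2 (by linarith)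
  have ha' (x : X) : c ≤ |a x| := hc_coe ▸ (ha x).trans (le_abs_self _)
  have hb (x : X) : |b x| ≤ ‖(⟨b, hb_lip.continuous⟩ : C(X, ℝ))‖₊ :=
    ContinuousMap.norm_coe_le_norm (⟨b, hb_lip.continuous⟩ : C(X, ℝ)) x
  have hμ_abs : |lam⁻¹| = lam⁻¹ := abs_of_pos (by positivity)
  have hμ : ‖lam⁻¹‖₊ < c := by
    rw [← NNReal.coe_lt_coe]
    push_cast [Real.norm_eq_abs, hμ_abs, hc_coe]
    exact (inv_lt_one_of_one_lt₀ hlam).trans hastar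
  have hμL : ‖lam⁻¹‖₊ * L.toNNReal < c := by
    rw [← NNReal.coe_lt_coe]
    push_cast [Real.coe_toNNReal', Real.norm_eq_abs, hμ_abs, hc_coe]
    rw [inv_mul_lt_iff₀ (by positivity)]
    exact max_lt hLlt (by positivity)
  obtain ⟨K, hK⟩ := exists_lipschitzWith_sum_stableTerm hc ha' hb ha_lip hb_lip hf hμ hμL
  have hS_lim (x : X) : Tendsto (fun n => ∑ i ∈ range n, stableTerm lam⁻¹ f a b i x) atTop
      (𝓝 (S x)) :=
    hS x ▸ (summable_stableTerm hc ha' hb hμ x).hasSum.tendsto_sum_nat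
  exact ⟨K, (isClosed_setOfPred_lipschitzWith K).mem_of_tendsto (tendsto_pi_nhds.2 hS_lim)
    (Eventually.of_forall hK)⟩

/-- If `λ > 1`, `a* > 1`, `0 < L < λ·a*`, `X` is a compact metric
space, `f` is `L`-Lipschitz, `a, b` are Lipschitz with `a ≥ a*`, then the stable
series `S(x) = ∑_{i=0}^∞ λ^{−i} b(f^i(x)) ∏_{j=0}^{i} a(f^j(x))⁻¹` is Lipschitz
continuous on `X`. -/
theorem stable_series_lipschitz {X : Type*} [MetricSpace X] [CompactSpace X]
    (lam astar L : ℝ) (hlam : 1 < lam) (hastar : 1 < astar)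
    (hL : 0 < L) (hLlt : L < lam * astar)
    (f : X → X) (hf : LipschitzWith (Real.toNNReal L) f)
    (a b : X → ℝ) (Ka Kb : ℝ≥0)
    (ha_lip : LipschitzWith Ka a) (hb_lip : LipschitzWith Kb b)
    (ha : ∀ x, astar ≤ a x)
    (S : X → ℝ)
    (hS : ∀ x, S x = ∑' i,
      (lam⁻¹) ^ i * b (f^[i] x) * ∏ j ∈ Finset.range (i + 1), (a (f^[j] x))⁻¹) :
    ∃ K : ℝ≥0, LipschitzWith K S :=
  stable_series_lipschitz_general lam astar L hlam hastar hLlt f hf a b Ka Kb ha_lip hb_lip ha S hS
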